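/- arXiv:2504.11636 — 4 statements merged into one kernel-verified Lean document; each statement's English description precedes it below -/
import Mathlib

section
/- Let $(Z_n)_{n\ge1}$ be a sequence of real random variables with finite variances, and set $S_n=\sum_{i=1}^n Z_i$, $S_0=0$. Suppose there exist constants $C>0$ and $r\ge1$ such that $\mathrm{Var}(S_n-S_m)\le C(n-m)^{2r-1}$ for all $n>m\ge0$. Then $(S_n-\mathbb{E}[S_n])/n^r \to 0$ almost surely as $n\to\infty$. -/
open MeasureTheory ProbabilityTheory Filter Finset Topology

private lemma aux_slln {Ω : Type*} [MeasurableSpace Ω] (P : Measure Ω) [IsProbabilityMeasure P]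
    (S : ℕ → Ω → ℝ) (hS0 : ∀ ω, S 0 ω = 0) (hSL2 : ∀ n, MemLp (S n) 2 P)
    (C r : ℝ) (hC : 0 < C) (hr : 1 ≤ r)
    (hVar : ∀ m n : ℕ, m ≤ n →
      variance (fun ω => S n ω - S m ω) P ≤ C * ((n : ℝ) - m) ^ (2 * r - 1)) :
    ∀ᵐ ω ∂P, Tendsto (fun n : ℕ => (S n ω - ∫ a, S n a ∂P) / (n : ℝ) ^ r)
      atTop (𝓝 0) := by
  have hSint : ∀ n, Integrable (S n) P := fun n => (hSL2 n).integrable one_le_two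
  set M : ℕ → ℝ := fun n => ∫ a, S n a ∂P with hM
  have hrpos : (0:ℝ) < r := lt_of_lt_of_le one_pos hr
  have h2r1 : (1:ℝ) ≤ 2*r - 1 := by linarith
  -- Chebyshev for increments
  have cheb : ∀ m n : ℕ, m ≤ n → ∀ c : ℝ, 0 < c →
      P {ω | c ≤ |(S n ω - M n) - (S m ω - M m)|}
        ≤ ENNReal.ofReal (C * ((n:ℝ) - m) ^ (2*r-1) / c^2) := by
    intro m n hmn c hc
    have hY : MemLp (fun ω => S n ω - S m ω) 2 P := (hSL2 n).sub (hSL2 m)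
    have h1 := meas_ge_le_variance_div_sq (μ := P) hY hc
    have hEY : (∫ ω, (S n ω - S m ω) ∂P) = M n - M m := integral_sub (hSint n) (hSint m)
    have hsets : {ω | c ≤ |(S n ω - M n) - (S m ω - M m)|}
        = {ω | c ≤ |(fun ω => S n ω - S m ω) ω - ∫ x, (S n x - S m x) ∂P|} := by
      ext ω
      simp only [Set.mem_setOf_eq, hEY]
      have : (S n ω - M n) - (S m ω - M m) = (S n ω - S m ω) - (M n - M m) := by ring
      rw [this]
    rw [hsets]
    refine le_trans h1 (ENNReal.ofReal_le_ofReal ?_)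
    have hv := hVar m n hmn
    gcongr
  -- key step: for every positive ε, a.s. eventually |S n - M n| ≤ ε n^r
  have key : ∀ ε : ℝ, 0 < ε → ∀ᵐ ω ∂P, ∀ᶠ n : ℕ in atTop,
      |S n ω - M n| ≤ ε * (n:ℝ)^r := by
    intro ε hε
    have hδ : 0 < ε/2 := by positivity
    set δ := ε/2 with hδdef
    set F : ℕ → Set Ω := fun k =>
      {ω | δ * (k:ℝ)^(2*r) ≤ |S (k^2) ω - M (k^2)|} ∪
      ⋃ n ∈ Finset.Icc (k^2) ((k+1)^2),
        {ω | δ * (k:ℝ)^(2*r) ≤ |(S n ω - M n) - (S (k^2) ω - M (k^2))|} with hF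
    set D : ℝ := C/δ^2 + 4*3^(2*r-1)*C/δ^2 with hD
    have hD0 : 0 < D := by positivity
    -- bound on P (F k) for k ≥ 1
    have hFk : ∀ k : ℕ, 1 ≤ k → P (F k) ≤ ENNReal.ofReal (D / (k:ℝ)^2) := by
      intro k hk
      have hx0 : (0:ℝ) < (k:ℝ) := by exact_mod_cast hk
      have hx1 : (1:ℝ) ≤ (k:ℝ) := by exact_mod_cast hk
      have hc : 0 < δ * (k:ℝ)^(2*r) := by positivity
      -- part A
      have hA : P {ω | δ * (k:ℝ)^(2*r) ≤ |S (k^2) ω - M (k^2)|}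
          ≤ ENNReal.ofReal (C * ((k:ℝ)^2) ^ (2*r-1) / (δ * (k:ℝ)^(2*r))^2) := by
        have hM0 : M 0 = 0 := by
          simp only [hM]
          rw [show (fun a => S 0 a) = (fun _ => (0:ℝ)) from funext hS0]
          simp
        have h0 := cheb 0 (k^2) (Nat.zero_le _) _ hc
        simp only [hS0, hM0, sub_zero, Nat.cast_zero, Nat.cast_pow] at h0
        exact h0
      -- part B
      have hB : P (⋃ n ∈ Finset.Icc (k^2) ((k+1)^2),
            {ω | δ*(k:ℝ)^(2*r) ≤ |(S n ω - M n) - (S (k^2) ω - M (k^2))|})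
          ≤ (Finset.Icc (k^2) ((k+1)^2)).card •
              ENNReal.ofReal (C * (2*(k:ℝ)+1)^(2*r-1) / (δ*(k:ℝ)^(2*r))^2) := by
        refine le_trans (measure_biUnion_finset_le _ _) ?_
        refine Finset.sum_le_card_nsmul _ _ _ ?_
        intro n hn
        rw [Finset.mem_Icc] at hn
        refine le_trans (cheb (k^2) n hn.1 _ hc) (ENNReal.ofReal_le_ofReal ?_)
        have hle1 : (0:ℝ) ≤ (n:ℝ) - (k^2:ℕ) := by
          have : ((k^2:ℕ):ℝ) ≤ (n:ℝ) := by exact_mod_cast hn.1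
          linarith
        have hle2 : (n:ℝ) - (k^2:ℕ) ≤ 2*(k:ℝ)+1 := by
          have : (n:ℝ) ≤ (((k+1)^2 : ℕ):ℝ) := by exact_mod_cast hn.2
          push_cast at this ⊢
          nlinarith
        gcongr
      have hcard : (Finset.Icc (k^2) ((k+1)^2)).card = 2*k+2 := by
        rw [Nat.card_Icc]
        have : (k+1)^2 = k^2 + (2*k+1) := by ring
        omega
      -- combine
      have hcomb : P (F k) ≤ ENNReal.ofReal (C * ((k:ℝ)^2) ^ (2*r-1) / (δ * (k:ℝ)^(2*r))^2
          + ((2*k+2 : ℕ):ℝ) * (C * (2*(k:ℝ)+1)^(2*r-1) / (δ*(k:ℝ)^(2*r))^2)) := by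
        rw [ENNReal.ofReal_add (by positivity) (by positivity)]
        refine le_trans (measure_union_le _ _) (add_le_add hA ?_)
        rw [ENNReal.ofReal_mul (by positivity), ENNReal.ofReal_natCast]
        rw [hcard] at hB
        simpa [nsmul_eq_mul] using hB
      refine le_trans hcomb (ENNReal.ofReal_le_ofReal ?_)
      -- real arithmetic
      set x := (k:ℝ) with hxdef
      have he0 : (δ * x^(2*r))^2 = δ^2 * (x^(2*r) * x^(2*r)) := by ring
      have ha : (x^2) ^ (2*r-1) * x^2 = x^(2*r) * x^(2*r) := by
        rw [← Real.rpow_natCast x 2, ← Real.rpow_mul hx0.le, ← Real.rpow_add hx0,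
          ← Real.rpow_add hx0]
        norm_num
        ring_nf
      have hterm1 : C * (x^2)^(2*r-1) / (δ * x^(2*r))^2 = C / δ^2 / x^2 := by
        rw [he0, ← ha]
        have ht : (0:ℝ) < (x^2)^(2*r-1) := Real.rpow_pos_of_pos (by positivity) _
        field_simp
      have hxx : x * x^(2*r-1) = x^(2*r) := by
        nth_rewrite 1 [← Real.rpow_one x]
        rw [← Real.rpow_add hx0]
        ring_nf
      have hx2le : x^2 ≤ x^(2*r) := by
        have : x^((2:ℕ):ℝ) ≤ x^(2*r) :=
          Real.rpow_le_rpow_of_exponent_le hx1 (by push_cast; linarith)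
        rwa [Real.rpow_natCast] at this
      have h2k1 : (2*x+1)^(2*r-1) ≤ 3^(2*r-1) * x^(2*r-1) := by
        rw [← Real.mul_rpow (by norm_num) hx0.le]
        exact Real.rpow_le_rpow (by linarith) (by linarith) (by linarith)
      have hterm2 : ((2*k+2 : ℕ):ℝ) * (C * (2*x+1)^(2*r-1) / (δ*x^(2*r))^2)
          ≤ 4*3^(2*r-1)*C / δ^2 / x^2 := by
        have h2k2 : ((2*k+2 : ℕ):ℝ) ≤ 4*x := by push_cast; linarith
        have step1 : ((2*k+2 : ℕ):ℝ) * (C * (2*x+1)^(2*r-1) / (δ*x^(2*r))^2)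
            ≤ (4*x) * (C * (3^(2*r-1) * x^(2*r-1)) / (δ*x^(2*r))^2) := by
          gcongr
        refine le_trans step1 ?_
        rw [he0]
        have heq : (4*x) * (C * (3^(2*r-1) * x^(2*r-1)) / (δ^2 * (x^(2*r) * x^(2*r))))
            = (4*3^(2*r-1)*C) / δ^2 / x^(2*r) := by
          rw [← hxx]
          have ht : (0:ℝ) < x^(2*r-1) := Real.rpow_pos_of_pos hx0 _
          field_simp
        rw [heq]
        gcongr
      have hDsplit : D / x^2 = C/δ^2/x^2 + 4*3^(2*r-1)*C/δ^2/x^2 := by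
        rw [hD]; ring
      rw [hDsplit, hterm1]
      linarith
    -- uniform summable bound
    have hFk' : ∀ k : ℕ, P (F k) ≤ ENNReal.ofReal ((4*D+4) / ((k:ℝ)+1)^2) := by
      intro k
      rcases Nat.eq_zero_or_pos k with rfl | hk
      · refine le_trans prob_le_one ?_
        rw [← ENNReal.ofReal_one]
        apply ENNReal.ofReal_le_ofReal
        rw [Nat.cast_zero]
        rw [le_div_iff₀ (by norm_num)]
        nlinarith
      · refine le_trans (hFk k hk) (ENNReal.ofReal_le_ofReal ?_)
        have hx1 : (1:ℝ) ≤ (k:ℝ) := by exact_mod_cast hk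
        rw [div_le_div_iff₀ (by positivity) (by positivity)]
        have h4 : ((k:ℝ)+1)^2 ≤ 4*(k:ℝ)^2 := by nlinarith
        nlinarith [mul_le_mul_of_nonneg_left h4 hD0.le, sq_nonneg ((k:ℝ))]
    have hsum : (∑' k, P (F k)) ≠ ⊤ := by
      have hs0 : Summable (fun n : ℕ => 1 / (n:ℝ)^2) :=
        Real.summable_one_div_nat_pow.mpr one_lt_two
      have hs1 : Summable (fun n : ℕ => 1 / ((n:ℝ)+1)^2) := by
        have h := (summable_nat_add_iff 1).mpr hs0
        refine h.congr fun n => ?_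
        push_cast
        ring
      have hs : Summable (fun k : ℕ => (4*D+4)/((k:ℝ)+1)^2) := by
        refine (hs1.mul_left (4*D+4)).congr fun n => ?_
        rw [mul_one_div]
      have h1 : (∑' k, P (F k)) ≤ ∑' k : ℕ, ENNReal.ofReal ((4*D+4)/((k:ℝ)+1)^2) :=
        ENNReal.tsum_le_tsum hFk'
      rw [← ENNReal.ofReal_tsum_of_nonneg (fun n => by positivity) hs] at h1
      exact (lt_of_le_of_lt h1 ENNReal.ofReal_lt_top).ne
    filter_upwards [ae_eventually_notMem hsum] with ω hω
    rw [eventually_atTop] at hω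
    obtain ⟨K, hK⟩ := hω
    rw [eventually_atTop]
    refine ⟨(max K 1)^2, fun n hn => ?_⟩
    set k := Nat.sqrt n with hkdef
    have hkK : max K 1 ≤ k := by
      rw [hkdef, Nat.le_sqrt']
      exact hn
    have hk1 : 1 ≤ k := le_trans (le_max_right K 1) hkK
    have hFω := hK k (le_trans (le_max_left K 1) hkK)
    rw [hF] at hFω
    simp only [Set.mem_union, Set.mem_iUnion, Set.mem_setOf_eq, not_or, not_exists,
      not_and, not_le, exists_prop] at hFω
    have hn1 : k^2 ≤ n := Nat.sqrt_le' n
    have hn2 : n ≤ (k+1)^2 := (Nat.lt_succ_sqrt' n).le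
    have hmem : n ∈ Finset.Icc (k^2) ((k+1)^2) := Finset.mem_Icc.2 ⟨hn1, hn2⟩
    have h1 : |S (k^2) ω - M (k^2)| < δ * (k:ℝ)^(2*r) := hFω.1
    have h2 : |(S n ω - M n) - (S (k^2) ω - M (k^2))| < δ*(k:ℝ)^(2*r) := hFω.2 n hmem
    have habs : |S n ω - M n| < ε * (k:ℝ)^(2*r) := by
      calc |S n ω - M n|
          ≤ |(S n ω - M n) - (S (k^2) ω - M (k^2))| + |S (k^2) ω - M (k^2)| := by
            have h := abs_add_le ((S n ω - M n) - (S (k^2) ω - M (k^2))) (S (k^2) ω - M (k^2))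
            simpa using h
        _ < δ*(k:ℝ)^(2*r) + δ*(k:ℝ)^(2*r) := add_lt_add h2 h1
        _ = ε * (k:ℝ)^(2*r) := by rw [hδdef]; ring
    have hcast : ((k:ℝ))^(2*r) ≤ (n:ℝ)^r := by
      have hkr : (k:ℝ)^(2*r) = (((k:ℝ)^2)) ^ r := by
        rw [show (2*r) = ((2:ℕ):ℝ)*r by norm_num, Real.rpow_mul (Nat.cast_nonneg k),
          Real.rpow_natCast]
      rw [hkr]
      refine Real.rpow_le_rpow (by positivity) ?_ (by linarith)
      have : ((k^2:ℕ):ℝ) ≤ (n:ℝ) := by exact_mod_cast hn1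
      push_cast at this
      linarith
    have hεk : ε * (k:ℝ)^(2*r) ≤ ε * (n:ℝ)^r := by
      gcongr
    exact le_trans habs.le hεk
  -- assemble the convergence
  have hj : ∀ᵐ ω ∂P, ∀ j : ℕ, ∀ᶠ n : ℕ in atTop,
      |S n ω - M n| ≤ (1/((j:ℝ)+1)) * (n:ℝ)^r :=
    ae_all_iff.2 fun j => key (1/((j:ℝ)+1)) (by positivity)
  filter_upwards [hj] with ω hω
  rw [Metric.tendsto_atTop]
  intro ε hε
  obtain ⟨j, hjε⟩ := exists_nat_one_div_lt hε
  have hωj := hω j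
  rw [eventually_atTop] at hωj
  obtain ⟨N, hN⟩ := hωj
  refine ⟨max N 1, fun n hn => ?_⟩
  have hn1 : 1 ≤ n := le_trans (le_max_right N 1) hn
  have hnN : N ≤ n := le_trans (le_max_left N 1) hn
  have hnr : (0:ℝ) < (n:ℝ)^r := Real.rpow_pos_of_pos (by exact_mod_cast hn1) r
  rw [dist_zero_right, Real.norm_eq_abs, abs_div, abs_of_pos hnr, div_lt_iff₀ hnr]
  refine lt_of_le_of_lt (hN n hnN) ?_
  exact mul_lt_mul_of_pos_right hjε hnr

/-- Dependent SLLN (Petrov): if `Var(S_n - S_m) ≤ C (n-m)^(2r-1)` for all `n > m ≥ 0`,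
then `(S_n - E S_n)/n^r → 0` almost surely. -/
theorem stmt_0 {Ω : Type*} [MeasurableSpace Ω] (P : Measure Ω) [IsProbabilityMeasure P]
    (Z : ℕ → Ω → ℝ) (hL2 : ∀ i, MemLp (Z i) 2 P)
    (C r : ℝ) (hC : 0 < C) (hr : 1 ≤ r)
    (hVar : ∀ m n : ℕ, m < n →
      variance (fun ω => (∑ i ∈ Icc 1 n, Z i ω) - ∑ i ∈ Icc 1 m, Z i ω) P
        ≤ C * ((n : ℝ) - m) ^ (2 * r - 1)) :
    ∀ᵐ ω ∂P, Tendsto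
      (fun n : ℕ =>
        ((∑ i ∈ Icc 1 n, Z i ω) - ∫ a, (∑ i ∈ Icc 1 n, Z i a) ∂P) / (n : ℝ) ^ r)
      atTop (𝓝 0) := by
  refine aux_slln P (fun n ω => ∑ i ∈ Icc 1 n, Z i ω) (fun ω => by simp)
    (fun n => by
      have h := memLp_finset_sum' (Icc 1 n) (fun i _ => hL2 i)
      have heq : (∑ i ∈ Icc 1 n, Z i) = fun ω => ∑ i ∈ Icc 1 n, Z i ω := by
        funext ω; simp
      rwa [heq] at h) C r hC hr ?_
  intro m n hmn
  rcases eq_or_lt_of_le hmn with rfl | h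
  · have hfun : (fun ω => (∑ i ∈ Icc 1 m, Z i ω) - ∑ i ∈ Icc 1 m, Z i ω)
        = (0 : Ω → ℝ) := by funext ω; simp
    rw [hfun, variance_zero, sub_self, Real.zero_rpow (by linarith), mul_zero]
  · exact hVar m n h
end

section
/- Let $(Z_n)_{n\ge1}$ be random variables with finite variances, $S_n=\sum_{i=1}^n Z_i$, $S_0=0$. Assume (i) $\mathrm{Var}(S_n-S_m)\le C(n-m)$ for all $n>m\ge0$ and some constant $C$, and (ii) $\lim_{n\to\infty} n^{-1}\mathbb{E}[S_n]=\mu$ for some constant $\mu$. Then $n^{-1}\max_{1\le i\le n}|Z_i|\to0$ almost surely. -/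
open MeasureTheory ProbabilityTheory Filter Finset Topology

lemma det_max {a : ℕ → ℝ} (h0 : ∀ i, 0 ≤ a i)
    (h : Tendsto (fun n => a n / n) atTop (𝓝 0)) :
    Tendsto (fun n : ℕ => (n : ℝ)⁻¹ * ⨆ i ∈ Finset.Icc 1 n, a i) atTop (𝓝 0) := by
  have hnonneg : ∀ n : ℕ, 0 ≤ (n : ℝ)⁻¹ * ⨆ i ∈ Finset.Icc 1 n, a i := by
    intro n
    refine mul_nonneg (by positivity) ?_
    exact Real.iSup_nonneg fun i => Real.iSup_nonneg fun _ => h0 i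
  rw [Metric.tendsto_atTop] at h ⊢
  intro ε hε
  obtain ⟨N, hN⟩ := h (ε / 2) (by positivity)
  set M : ℝ := ∑ i ∈ Finset.range (N + 1), a i with hM
  have hM0 : 0 ≤ M := Finset.sum_nonneg fun i _ => h0 i
  obtain ⟨N₂, hN₂⟩ := exists_nat_ge (2 * M / ε)
  refine ⟨max (N + 1) (N₂ + 1), fun n hn => ?_⟩
  have hnN : N + 1 ≤ n := le_trans (le_max_left _ _) hn
  have hnN₂ : (2 * M / ε : ℝ) ≤ n := by
    refine hN₂.trans ?_
    exact_mod_cast le_trans (Nat.le_succ N₂) (le_trans (le_max_right _ _) hn)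
  have hn1 : 1 ≤ n := le_trans (Nat.le_add_left 1 N) hnN
  have hnpos : (0 : ℝ) < n := by exact_mod_cast hn1
  have hbound : ∀ i ∈ Finset.Icc 1 n, a i ≤ (ε / 2) * n := by
    intro i hi
    rw [Finset.mem_Icc] at hi
    by_cases hiN : N ≤ i
    · have hipos : (0 : ℝ) < i := by exact_mod_cast hi.1
      have := hN i hiN
      rw [Real.dist_eq, sub_zero, abs_of_nonneg (div_nonneg (h0 i) hipos.le)] at this
      have : a i < (ε / 2) * i := by rwa [div_lt_iff₀ hipos] at this
      refine this.le.trans ?_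
      have : (i : ℝ) ≤ n := by exact_mod_cast hi.2
      nlinarith
    · have hiM : a i ≤ M := by
        refine Finset.single_le_sum (f := a) (fun j _ => h0 j) ?_
        rw [Finset.mem_range]; omega
      refine hiM.trans ?_
      rw [div_le_iff₀ hε] at hnN₂
      nlinarith
  have hsup : (⨆ i ∈ Finset.Icc 1 n, a i) ≤ (ε / 2) * n := by
    refine Real.iSup_le (fun i => Real.iSup_le (fun hi => hbound i hi) ?_) ?_
    · positivity
    · positivity
  rw [Real.dist_eq, sub_zero, abs_of_nonneg (hnonneg n)]
  calc (n : ℝ)⁻¹ * ⨆ i ∈ Finset.Icc 1 n, a i ≤ (n : ℝ)⁻¹ * ((ε / 2) * n) :=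
        mul_le_mul_of_nonneg_left hsup (by positivity)
    _ = ε / 2 := by field_simp
    _ < ε := by linarith

set_option maxHeartbeats 1000000 in
/-- If `Var(S_n - S_m) ≤ C (n-m)` and `E S_n / n → μ`, then
`n⁻¹ max_{1 ≤ i ≤ n} |Z_i| → 0` almost surely. -/
theorem stmt_1 {Ω : Type*} [MeasurableSpace Ω] (P : Measure Ω) [IsProbabilityMeasure P]
    (Z : ℕ → Ω → ℝ) (hL2 : ∀ i, MemLp (Z i) 2 P)
    (C μ : ℝ)
    (hVar : ∀ m n : ℕ, m < n →
      variance (fun ω => (∑ i ∈ Icc 1 n, Z i ω) - ∑ i ∈ Icc 1 m, Z i ω) P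
        ≤ C * ((n : ℝ) - m))
    (hMean : Tendsto (fun n : ℕ => (∫ a, (∑ i ∈ Icc 1 n, Z i a) ∂P) / (n : ℝ))
      atTop (𝓝 μ)) :
    ∀ᵐ ω ∂P, Tendsto
      (fun n : ℕ => (n : ℝ)⁻¹ * ⨆ i ∈ Icc 1 n, |Z i ω|) atTop (𝓝 0) := by
  have hint : ∀ i, Integrable (Z i) P := fun i => (hL2 i).integrable one_le_two
  have hSint : ∀ n : ℕ, Integrable (fun ω => ∑ i ∈ Icc 1 n, Z i ω) P := by
    intro n
    exact integrable_finset_sum _ fun i _ => hint i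
  set e : ℕ → ℝ := fun n => ∫ a, (∑ i ∈ Icc 1 n, Z i a) ∂P with he
  -- variance of each increment is bounded by C
  have hvarZ : ∀ n : ℕ, variance (Z (n + 1)) P ≤ C := by
    intro n
    have h := hVar n (n + 1) (Nat.lt_succ_self n)
    have heq : (fun ω => (∑ i ∈ Icc 1 (n + 1), Z i ω) - ∑ i ∈ Icc 1 n, Z i ω)
        = Z (n + 1) := by
      funext ω
      rw [Finset.sum_Icc_succ_top (Nat.le_add_left 1 n)]
      ring
    rw [heq] at h
    calc variance (Z (n + 1)) P ≤ C * (((n + 1 : ℕ) : ℝ) - n) := h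
      _ = C := by push_cast; ring
  have hC : 0 ≤ C := le_trans (variance_nonneg _ _) (hvarZ 0)
  -- increments of expectations
  have hinc : ∀ n : ℕ, ∫ a, Z (n + 1) a ∂P = e (n + 1) - e n := by
    intro n
    have : e (n + 1) = e n + ∫ a, Z (n + 1) a ∂P := by
      simp only [he]
      rw [← integral_add (hSint n) (hint (n + 1))]
      congr 1
      funext a
      rw [Finset.sum_Icc_succ_top (Nat.le_add_left 1 n)]
    linarith
  -- E Z n / n → 0
  have he0 : e 0 = 0 := by simp [he]
  have hg : Tendsto (fun n : ℕ => e n / n) atTop (𝓝 μ) := hMean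
  have hg' : Tendsto (fun n : ℕ => e (n - 1) / n) atTop (𝓝 μ) := by
    have h1 : Tendsto (fun n : ℕ => e (n - 1) / ((n - 1 : ℕ) : ℝ)) atTop (𝓝 μ) :=
      hg.comp (tendsto_sub_atTop_nat 1)
    have h2 : Tendsto (fun n : ℕ => ((n - 1 : ℕ) : ℝ) / n) atTop (𝓝 1) := by
      have : Tendsto (fun n : ℕ => 1 - 1 / (n : ℝ)) atTop (𝓝 1) := by
        simpa using (tendsto_const_nhds (x := (1:ℝ)).sub tendsto_one_div_atTop_nhds_zero_nat)
      refine this.congr' ?_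
      filter_upwards [eventually_ge_atTop 1] with n hn
      have hnpos : (0 : ℝ) < n := by exact_mod_cast hn
      rw [Nat.cast_sub hn]
      field_simp
      norm_num
    have := h1.mul h2
    rw [mul_one] at this
    refine this.congr fun n => ?_
    by_cases hn : (n - 1 : ℕ) = 0
    · rcases Nat.le_one_iff_eq_zero_or_eq_one.1 (by omega : n ≤ 1) with rfl | rfl <;>
        simp [he0, hn]
    · have hne : ((n - 1 : ℕ) : ℝ) ≠ 0 := Nat.cast_ne_zero.2 hn
      field_simp
  have hEZ : Tendsto (fun n : ℕ => (∫ a, Z n a ∂P) / n) atTop (𝓝 0) := by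
    have : Tendsto (fun n : ℕ => e n / n - e (n - 1) / n) atTop (𝓝 0) := by
      simpa using hg.sub hg'
    refine this.congr' ?_
    filter_upwards [eventually_ge_atTop 1] with n hn
    obtain ⟨m, rfl⟩ : ∃ m, n = m + 1 := ⟨n - 1, by omega⟩
    rw [hinc m]
    simp [sub_div]
  -- Borel–Cantelli: deviation of Z n from its mean
  have hBC : ∀ k : ℕ, ∀ᵐ ω ∂P, ∀ᶠ n in atTop,
      |Z n ω - ∫ a, Z n a ∂P| < (n : ℝ) / (k + 1) := by
    intro k
    have hsum : (∑' n : ℕ,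
        P {ω | (n : ℝ) / (k + 1) ≤ |Z n ω - ∫ a, Z n a ∂P|}) ≠ ⊤ := by
      have hterm : ∀ n : ℕ, P {ω | (n : ℝ) / (k + 1) ≤ |Z n ω - ∫ a, Z n a ∂P|}
          ≤ ENNReal.ofReal (C * ((k : ℝ) + 1) ^ 2 / (n : ℝ) ^ 2)
            + (if n = 0 then 1 else 0) := by
        intro n
        rcases Nat.eq_zero_or_pos n with rfl | hn
        · simp only [if_pos rfl]
          exact le_add_left prob_le_one
        · have hnpos : (0 : ℝ) < n := by exact_mod_cast hn
          have hc : (0 : ℝ) < (n : ℝ) / (k + 1) := by positivity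
          refine le_trans (meas_ge_le_variance_div_sq (hL2 n) hc) ?_
          rw [if_neg (Nat.pos_iff_ne_zero.1 hn), add_zero]
          refine ENNReal.ofReal_le_ofReal ?_
          have h1 : variance (Z n) P ≤ C := by
            obtain ⟨m, rfl⟩ : ∃ m, n = m + 1 := ⟨n - 1, by omega⟩
            exact hvarZ m
          have h2 : ((n : ℝ) / (k + 1)) ^ 2 = (n : ℝ) ^ 2 / ((k : ℝ) + 1) ^ 2 := by
            push_cast; rw [div_pow]
          rw [h2, div_div_eq_mul_div]
          have hpos : (0 : ℝ) < (n : ℝ) ^ 2 := by positivity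
          refine div_le_div_of_nonneg_right ?_ hpos.le
          nlinarith [variance_nonneg (Z n) P, sq_nonneg ((k : ℝ) + 1)]
      have hsummable : Summable (fun n : ℕ => C * ((k : ℝ) + 1) ^ 2 / (n : ℝ) ^ 2) := by
        have hbase : Summable (fun n : ℕ => 1 / (n : ℝ) ^ 2) :=
          Real.summable_one_div_nat_pow.2 one_lt_two
        refine (hbase.mul_left (C * ((k : ℝ) + 1) ^ 2)).congr fun n => ?_
        rw [mul_one_div]
      have hnn : ∀ n : ℕ, 0 ≤ C * ((k : ℝ) + 1) ^ 2 / (n : ℝ) ^ 2 := fun n =>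
        div_nonneg (mul_nonneg hC (by positivity)) (by positivity)
      refine ne_top_of_le_ne_top ?_ (ENNReal.tsum_le_tsum hterm)
      rw [ENNReal.tsum_add]
      refine ENNReal.add_ne_top.2 ⟨?_, ?_⟩
      · rw [← ENNReal.ofReal_tsum_of_nonneg hnn hsummable]
        exact ENNReal.ofReal_ne_top
      · rw [tsum_ite_eq]
        exact ENNReal.one_ne_top
    have hae := MeasureTheory.ae_eventually_notMem hsum
    filter_upwards [hae] with ω hω
    filter_upwards [hω] with n hn
    simpa [Set.mem_setOf_eq, not_le] using hn
  -- a.s. convergence of centered increments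
  have hD : ∀ᵐ ω ∂P, Tendsto (fun n : ℕ => (Z n ω - ∫ a, Z n a ∂P) / n) atTop (𝓝 0) := by
    filter_upwards [ae_all_iff.2 hBC] with ω hω
    rw [Metric.tendsto_atTop]
    intro ε hε
    obtain ⟨k, hk⟩ := exists_nat_one_div_lt hε
    have hev := (hω k).and (eventually_ge_atTop 1)
    obtain ⟨N, hN⟩ := eventually_atTop.1 hev
    refine ⟨N, fun n hn => ?_⟩
    obtain ⟨h1, h2⟩ := hN n hn
    have hnpos : (0 : ℝ) < n := by exact_mod_cast h2
    rw [Real.dist_eq, sub_zero, abs_div, Nat.abs_cast]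
    calc |Z n ω - ∫ a, Z n a ∂P| / n < ((n : ℝ) / (k + 1)) / n := by gcongr
      _ = 1 / ((k : ℝ) + 1) := by field_simp
      _ < ε := by exact_mod_cast hk
  filter_upwards [hD] with ω hω
  have hZ : Tendsto (fun n : ℕ => Z n ω / n) atTop (𝓝 0) := by
    have h := hω.add hEZ
    rw [add_zero] at h
    refine h.congr fun n => ?_
    rw [← add_div, sub_add_cancel]
  have habs : Tendsto (fun n : ℕ => |Z n ω| / n) atTop (𝓝 0) := by
    have h := hZ.abs
    rw [abs_zero] at h
    refine h.congr fun n => ?_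
    rw [abs_div, Nat.abs_cast]
  exact det_max (fun i => abs_nonneg _) habs
end

section
/- Let $(b_n)_{n\ge1}$ be positive reals with $B_n=\sum_{i=1}^n b_i$. Let $\{Y_{n,i}:1\le i\le n\}$ be a triangular array where for each $n$ the variables $Y_{n,1},\ldots,Y_{n,n}$ are independent with $\mathbb{E}[Y_{n,i}]=nb_i/B_n$ and $\mathrm{Var}(Y_{n,i})=(nb_i/B_n)^2$. Let $\{a_{n,i}\}$ be real numbers satisfying $B_n^{-1}\sum_{i=1}^n b_i|a_{n,i}|\to c<\infty$ and $B_n^{-1}\max_{1\le i\le n} b_i|a_{n,i}|\to0$, and suppose $\bar a_n:=B_n^{-1}\sum_{i=1}^n b_i a_{n,i}\to\alpha$. Then $n^{-1}\sum_{i=1}^n a_{n,i}Y_{n,i}\to\alpha$ in probability. -/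
open MeasureTheory ProbabilityTheory Filter Finset Topology

private lemma le_biSup_finset {s : Finset ℕ} (f : ℕ → ℝ) {i : ℕ} (hi : i ∈ s) :
    f i ≤ ⨆ j ∈ s, f j := by
  have hbdd : BddAbove (Set.range fun j => ⨆ _ : j ∈ s, f j) := by
    apply Set.Finite.bddAbove
    apply Set.Finite.subset (Set.Finite.insert 0 ((s.finite_toSet).image f))
    rintro x ⟨j, rfl⟩
    show (⨆ _ : j ∈ s, f j) ∈ insert 0 (f '' ↑s)
    by_cases hj : j ∈ s
    · have : Nonempty (j ∈ s) := ⟨hj⟩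
      rw [ciSup_const]
      exact Or.inr ⟨j, hj, rfl⟩
    · have : IsEmpty (j ∈ s) := ⟨hj⟩
      rw [iSup_of_empty', Real.sSup_empty]
      exact Or.inl rfl
  have h1 : f i = ⨆ _ : i ∈ s, f i := by
    have : Nonempty (i ∈ s) := ⟨hi⟩
    rw [ciSup_const]
  rw [h1]
  exact le_ciSup hbdd i

/-- Weighted probability-convergence theorem: if the triangular array `Y_{n,i}` is
row-independent with mean `n b_i / B_n` and variance `(n b_i / B_n)^2`, and the weights
`a_{n,i}` satisfy the averaging conditions, then `n⁻¹ ∑ a_{n,i} Y_{n,i} → α` in probability. -/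
theorem stmt_3 {Ω : Type*} [MeasurableSpace Ω] (P : Measure Ω) [IsProbabilityMeasure P]
    (b : ℕ → ℝ) (hb : ∀ i, 0 < b i)
    (B : ℕ → ℝ) (hB : ∀ n, B n = ∑ i ∈ Icc 1 n, b i)
    (Y : ℕ → ℕ → Ω → ℝ) (hL2 : ∀ n i, MemLp (Y n i) 2 P)
    (hIndep : ∀ n : ℕ,
      iIndepFun
        (fun i : (Icc 1 n : Finset ℕ) => Y n i) P)
    (hMean : ∀ n i, i ∈ Icc 1 n → (∫ ω, Y n i ω ∂P) = n * b i / B n)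
    (hVarY : ∀ n i, i ∈ Icc 1 n → variance (Y n i) P = (n * b i / B n) ^ 2)
    (a : ℕ → ℕ → ℝ) (c α : ℝ)
    (hAvgAbs : Tendsto (fun n : ℕ => (B n)⁻¹ * ∑ i ∈ Icc 1 n, b i * |a n i|)
      atTop (𝓝 c))
    (hMax : Tendsto (fun n : ℕ => (B n)⁻¹ * ⨆ i ∈ Icc 1 n, b i * |a n i|)
      atTop (𝓝 0))
    (hAvg : Tendsto (fun n : ℕ => (B n)⁻¹ * ∑ i ∈ Icc 1 n, b i * a n i)
      atTop (𝓝 α)) :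
    ∀ ε > (0 : ℝ), Tendsto
      (fun n : ℕ =>
        P {ω | ε ≤ |(n : ℝ)⁻¹ * ∑ i ∈ Icc 1 n, a n i * Y n i ω - α|})
      atTop (𝓝 0) := by
  intro ε hε
  classical
  set abar : ℕ → ℝ := fun n => (B n)⁻¹ * ∑ i ∈ Icc 1 n, b i * a n i with habar
  set V : ℕ → ℝ := fun n => ∑ i ∈ Icc 1 n, (b i * a n i / B n) ^ 2 with hV
  set T : ℕ → Ω → ℝ :=
    fun n => ∑ i ∈ Icc 1 n, fun ω => ((n : ℝ)⁻¹ * a n i) * Y n i ω with hT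
  have hBpos : ∀ n : ℕ, 1 ≤ n → 0 < B n := by
    intro n hn
    rw [hB]
    exact Finset.sum_pos (fun i _ => hb i) ⟨1, by simp [hn]⟩
  have hTmem : ∀ n, MemLp (T n) 2 P :=
    fun n => memLp_finset_sum' _ (fun i _ => (hL2 n i).const_mul _)
  have hTS : ∀ n ω, T n ω = (n : ℝ)⁻¹ * ∑ i ∈ Icc 1 n, a n i * Y n i ω := by
    intro n ω
    simp only [hT, Finset.sum_apply, Finset.mul_sum]
    exact Finset.sum_congr rfl (fun i _ => by ring)
  have hTmean : ∀ n, 1 ≤ n → (∫ ω, T n ω ∂P) = abar n := by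
    intro n hn
    have hn0 : (n : ℝ) ≠ 0 := Nat.cast_ne_zero.mpr (by omega)
    have h0 : (∫ ω, T n ω ∂P) = ∑ i ∈ Icc 1 n, ∫ ω, ((n : ℝ)⁻¹ * a n i) * Y n i ω ∂P := by
      show (∫ ω, (∑ i ∈ Icc 1 n, fun ω' => ((n : ℝ)⁻¹ * a n i) * Y n i ω') ω ∂P) = _
      simp only [Finset.sum_apply]
      exact integral_finset_sum _ (fun i _ => ((hL2 n i).integrable one_le_two).const_mul _)
    rw [h0]
    show _ = (B n)⁻¹ * ∑ i ∈ Icc 1 n, b i * a n i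
    rw [Finset.mul_sum]
    refine Finset.sum_congr rfl (fun i hi => ?_)
    rw [integral_const_mul, hMean n i hi,
      show ((n : ℝ)⁻¹ * a n i) * ((n : ℝ) * b i / B n)
        = ((n : ℝ) * (n : ℝ)⁻¹) * (a n i * b i / B n) by ring,
      mul_inv_cancel₀ hn0, one_mul]
    ring
  have hTvar : ∀ n, 1 ≤ n → variance (T n) P = V n := by
    intro n hn
    have hn0 : (n : ℝ) ≠ 0 := Nat.cast_ne_zero.mpr (by omega)
    set X : (Icc 1 n : Finset ℕ) → Ω → ℝ :=
      fun i => fun ω => ((n : ℝ)⁻¹ * a n (i : ℕ)) * Y n (i : ℕ) ω with hX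
    have hmem : ∀ i ∈ (Icc 1 n).attach, MemLp (X i) 2 P :=
      fun i _ => (hL2 n i).const_mul _
    have hpair : Set.Pairwise ↑((Icc 1 n).attach)
        (fun i j => IndepFun (X i) (X j) P) := by
      intro i _ j _ hij
      exact ((hIndep n).indepFun hij).comp
        (measurable_const_mul _) (measurable_const_mul _)
    have h1 : T n = ∑ i ∈ (Icc 1 n).attach, X i := by
      show (∑ i ∈ Icc 1 n, fun ω => ((n : ℝ)⁻¹ * a n i) * Y n i ω) = _
      exact (Finset.sum_attach (Icc 1 n)
        (fun i => fun ω => ((n : ℝ)⁻¹ * a n i) * Y n i ω)).symm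
    rw [h1, IndepFun.variance_sum hmem hpair]
    show _ = ∑ i ∈ Icc 1 n, (b i * a n i / B n) ^ 2
    rw [← Finset.sum_attach (Icc 1 n) (fun i => (b i * a n i / B n) ^ 2)]
    refine Finset.sum_congr rfl (fun i _ => ?_)
    have h2 : X i = ((n : ℝ)⁻¹ * a n (i : ℕ)) • (Y n (i : ℕ)) := rfl
    rw [h2, variance_smul, hVarY n i i.2,
      show ((n : ℝ)⁻¹ * a n (i : ℕ)) ^ 2 * ((n : ℝ) * b (i : ℕ) / B n) ^ 2
        = ((n : ℝ) * (n : ℝ)⁻¹) ^ 2 * (b (i : ℕ) * a n (i : ℕ) / B n) ^ 2 by ring,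
      mul_inv_cancel₀ hn0, one_pow, one_mul]
  -- V tends to 0
  have hV0 : Tendsto V atTop (𝓝 0) := by
    have hprod : Tendsto (fun n => ((B n)⁻¹ * ⨆ i ∈ Icc 1 n, b i * |a n i|) *
        ((B n)⁻¹ * ∑ i ∈ Icc 1 n, b i * |a n i|)) atTop (𝓝 0) := by
      simpa using hMax.mul hAvgAbs
    refine squeeze_zero' ?_ ?_ hprod
    · filter_upwards with n
      exact Finset.sum_nonneg (fun i _ => sq_nonneg _)
    · filter_upwards [eventually_ge_atTop 1] with n hn
      have hBn := hBpos n hn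
      set M : ℝ := ⨆ i ∈ Icc 1 n, b i * |a n i| with hM
      have h3 : ((B n)⁻¹ * M) * ((B n)⁻¹ * ∑ i ∈ Icc 1 n, b i * |a n i|)
          = ∑ i ∈ Icc 1 n, ((B n)⁻¹ * M) * ((B n)⁻¹ * (b i * |a n i|)) := by
        rw [Finset.mul_sum, Finset.mul_sum]
      show V n ≤ ((B n)⁻¹ * M) * ((B n)⁻¹ * ∑ i ∈ Icc 1 n, b i * |a n i|)
      rw [h3]
      refine Finset.sum_le_sum (fun i hi => ?_)
      have hx0 : 0 ≤ (B n)⁻¹ * (b i * |a n i|) :=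
        mul_nonneg (inv_nonneg.mpr hBn.le) (mul_nonneg (hb i).le (abs_nonneg _))
      have hxM : (B n)⁻¹ * (b i * |a n i|) ≤ (B n)⁻¹ * M :=
        mul_le_mul_of_nonneg_left (le_biSup_finset (fun j => b j * |a n j|) hi)
          (inv_nonneg.mpr hBn.le)
      have habs : |b i * a n i / B n| = (B n)⁻¹ * (b i * |a n i|) := by
        rw [abs_div, abs_mul, abs_of_pos (hb i), abs_of_pos hBn]
        ring
      calc (b i * a n i / B n) ^ 2 = |b i * a n i / B n| ^ 2 := (sq_abs _).symm
        _ = ((B n)⁻¹ * (b i * |a n i|)) * ((B n)⁻¹ * (b i * |a n i|)) := by rw [habs, sq]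
        _ ≤ ((B n)⁻¹ * M) * ((B n)⁻¹ * (b i * |a n i|)) :=
            mul_le_mul_of_nonneg_right hxM hx0
  have hVdiv : Tendsto (fun n => V n / (ε / 2) ^ 2) atTop (𝓝 0) := by
    simpa using hV0.div_const ((ε / 2) ^ 2)
  have hbound : Tendsto (fun n => ENNReal.ofReal (V n / (ε / 2) ^ 2)) atTop (𝓝 0) := by
    rw [← ENNReal.ofReal_zero]
    exact ENNReal.tendsto_ofReal hVdiv
  refine tendsto_of_tendsto_of_tendsto_of_le_of_le' tendsto_const_nhds hbound
    (Eventually.of_forall fun n => zero_le) ?_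
  have h1 : ∀ᶠ n in atTop, |abar n - α| < ε / 2 := by
    have := hAvg.eventually (Metric.ball_mem_nhds α (by positivity : (0:ℝ) < ε / 2))
    filter_upwards [this] with n hn
    rwa [Real.dist_eq] at hn
  filter_upwards [h1, eventually_ge_atTop 1] with n hn1 hn
  have hε2 : (0:ℝ) < ε / 2 := by positivity
  have hsub : {ω | ε ≤ |(n : ℝ)⁻¹ * ∑ i ∈ Icc 1 n, a n i * Y n i ω - α|}
      ⊆ {ω | ε / 2 ≤ |T n ω - ∫ ω, T n ω ∂P|} := by
    intro ω hω
    simp only [Set.mem_setOf_eq] at hω ⊢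
    rw [hTmean n hn]
    rw [← hTS n ω] at hω
    have htri := abs_sub_le (T n ω) (abar n) α
    have h2 := abs_nonneg (T n ω - abar n)
    linarith
  calc P {ω | ε ≤ |(n : ℝ)⁻¹ * ∑ i ∈ Icc 1 n, a n i * Y n i ω - α|}
      ≤ P {ω | ε / 2 ≤ |T n ω - ∫ ω, T n ω ∂P|} := measure_mono hsub
    _ ≤ ENNReal.ofReal (variance (T n) P / (ε / 2) ^ 2) :=
        meas_ge_le_variance_div_sq (hTmem n) hε2
    _ = ENNReal.ofReal (V n / (ε / 2) ^ 2) := by rw [hTvar n hn]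
end

section
/- Under design conditions (i) $\sup_l\pi_l^{-1}\le\gamma<\infty$ and (ii) $\sup_{k<l}|\pi_{lk}/(\pi_l\pi_k)-1|=O(l^{-1})$, and $\mathbb{E}_{\theta_0}|g(X^*)|^2<\infty$, the maximum term vanishes: $W_n^{-1}\max_{1\le i\le n} w_i|g(X_i)| \to 0$ almost surely, where $w_i=\pi_i^{-1}$ and $W_n=\sum_{i=1}^n w_i$. -/
open MeasureTheory ProbabilityTheory Finset

private lemma aux_summable_ofReal (K : ℝ) (hK : 0 ≤ K) :
    ∑' l : ℕ, ENNReal.ofReal (K / ((l : ℝ) + 1) ^ 2) ≠ ⊤ := by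
  have hs : Summable (fun l : ℕ => K / ((l : ℝ) + 1) ^ 2) := by
    have h1 : Summable (fun l : ℕ => 1 / ((l : ℝ) + 1) ^ 2) := by
      have := (summable_nat_add_iff (f := fun n : ℕ => 1 / (n : ℝ) ^ 2) 1).mpr
        (Real.summable_one_div_nat_pow.mpr one_lt_two)
      refine this.congr fun n => ?_
      push_cast
      ring
    simpa [div_eq_mul_inv, mul_one_div] using h1.mul_left K
  rw [← ENNReal.ofReal_tsum_of_nonneg (fun l => by positivity) hs]
  exact ENNReal.ofReal_ne_top

private lemma aux_tsum_ne_top (K : ℝ) (hK : 0 ≤ K) (u : ℕ → ENNReal)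
    (h : ∀ l, u l ≤ ENNReal.ofReal (K / ((l : ℝ) + 1) ^ 2)) : ∑' l, u l ≠ ⊤ :=
  ne_top_of_le_ne_top (aux_summable_ofReal K hK) (ENNReal.tsum_le_tsum h)

private lemma aux_cheby {Ω : Type*} [MeasurableSpace Ω] (P : Measure Ω) [IsFiniteMeasure P]
    (f : Ω → ℝ) (hf : Integrable (fun ω => f ω ^ 2) P) (t : ℝ) (ht : 0 < t) :
    (P {ω | t ≤ |f ω|}).toReal ≤ (∫ ω, f ω ^ 2 ∂P) / t ^ 2 := by
  have hsub : {ω | t ≤ |f ω|} ⊆ {ω | t ^ 2 ≤ f ω ^ 2} := by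
    intro ω hω
    have : t ^ 2 ≤ |f ω| ^ 2 := pow_le_pow_left₀ ht.le hω 2
    simpa [sq_abs] using this
  have h1 : (P {ω | t ≤ |f ω|}).toReal ≤ (P {ω | t ^ 2 ≤ f ω ^ 2}).toReal :=
    ENNReal.toReal_mono (measure_ne_top _ _) (measure_mono hsub)
  have h2 := mul_meas_ge_le_integral_of_nonneg
    (ae_of_all P (fun ω => sq_nonneg (f ω))) hf (t ^ 2)
  rw [le_div_iff₀ (by positivity)]
  calc (P {ω | t ≤ |f ω|}).toReal * t ^ 2
      ≤ (P {ω | t ^ 2 ≤ f ω ^ 2}).toReal * t ^ 2 := by nlinarith [h1, sq_nonneg t]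
    _ = t ^ 2 * (P {ω | t ^ 2 ≤ f ω ^ 2}).toReal := mul_comm _ _
    _ ≤ ∫ ω, f ω ^ 2 ∂P := h2

private lemma aux_maxterm {Ω : Type*} [MeasurableSpace Ω] (P : Measure Ω) [IsProbabilityMeasure P]
    (Y : ℕ → Ω → ℝ) (G : ℝ) (hG : 0 ≤ G)
    (htail : ∀ (l : ℕ) (t : ℝ), 0 < t → (P {ω | t ≤ |Y l ω|}).toReal ≤ G / t ^ 2) :
    ∀ᵐ ω ∂P, Filter.Tendsto (fun l : ℕ => |Y l ω| / l) Filter.atTop (nhds 0) := by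
  have hae : ∀ k : ℕ, ∀ᵐ ω ∂P, ∀ᶠ l : ℕ in Filter.atTop,
      ω ∉ {ω' | (l : ℝ) * (1/((k:ℝ)+1)) ≤ |Y l ω'|} := by
    intro k
    apply MeasureTheory.ae_eventually_notMem
    apply aux_tsum_ne_top (G * ((k:ℝ)+1)^2 * 4 + 1) (by positivity)
    intro l
    have hKnn : (0:ℝ) ≤ (G * ((k:ℝ)+1)^2 * 4 + 1) / ((l:ℝ)+1)^2 := by positivity
    rw [ENNReal.le_ofReal_iff_toReal_le (measure_ne_top _ _) hKnn]
    rcases Nat.eq_zero_or_pos l with rfl | hl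
    · have h1 : (P {ω' | ((0:ℕ) : ℝ) * (1/((k:ℝ)+1)) ≤ |Y 0 ω'|}).toReal ≤ 1 := by
        rw [show ((1:ℝ)) = (P Set.univ).toReal by simp]
        exact ENNReal.toReal_mono (measure_ne_top _ _) (measure_mono (Set.subset_univ _))
      calc (P {ω' | ((0:ℕ) : ℝ) * (1/((k:ℝ)+1)) ≤ |Y 0 ω'|}).toReal ≤ 1 := h1
        _ ≤ (G * ((k:ℝ)+1)^2 * 4 + 1) / (((0:ℕ):ℝ)+1)^2 := by norm_num; positivity
    · have hlpos : (0:ℝ) < l := by exact_mod_cast hl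
      have ht : (0:ℝ) < (l : ℝ) * (1/((k:ℝ)+1)) := by positivity
      refine (htail l _ ht).trans ?_
      rw [div_le_div_iff₀ (by positivity) (by positivity)]
      have hl1 : (1:ℝ) ≤ l := by exact_mod_cast hl
      have h4 : ((l:ℝ)+1)^2 ≤ 4 * (l:ℝ)^2 := by nlinarith
      have expand : ((l : ℝ) * (1/((k:ℝ)+1)))^2 = (l:ℝ)^2 / ((k:ℝ)+1)^2 := by
        field_simp
      rw [expand]
      have hrhs : (G * ((k:ℝ)+1)^2 * 4 + 1) * ((l:ℝ)^2 / ((k:ℝ)+1)^2)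
          = 4*G*(l:ℝ)^2 + (l:ℝ)^2/((k:ℝ)+1)^2 := by
        field_simp
      rw [hrhs]
      have hpos2 : (0:ℝ) ≤ (l:ℝ)^2/((k:ℝ)+1)^2 := by positivity
      nlinarith [hG, h4]
  rw [← MeasureTheory.ae_all_iff] at hae
  filter_upwards [hae] with ω hω
  rw [Metric.tendsto_nhds]
  intro ε hε
  obtain ⟨k, hk⟩ := exists_nat_one_div_lt hε
  filter_upwards [hω k, Filter.eventually_ge_atTop 1] with l hl1 hl2
  have hlpos : (0:ℝ) < l := by exact_mod_cast hl2
  simp only [Set.mem_setOf_eq, not_le] at hl1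
  rw [Real.dist_eq, sub_zero, abs_of_nonneg (by positivity)]
  have hstep : |Y l ω| / l < 1/((k:ℝ)+1) := by
    rw [div_lt_iff₀ hlpos]
    calc |Y l ω| < (l : ℝ) * (1/((k:ℝ)+1)) := hl1
      _ = 1/((k:ℝ)+1) * l := mul_comm _ _
  exact hstep.trans hk

private lemma aux_lowerbound {Ω : Type*} [MeasurableSpace Ω] (P : Measure Ω)
    [IsProbabilityMeasure P]
    (S : ℕ → Ω → ℝ) (hmono : ∀ (M N : ℕ) (ω : Ω), M ≤ N → S M ω ≤ S N ω)
    (hint : ∀ N : ℕ, Integrable (fun ω => (S N ω - N) ^ 2) P)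
    (C : ℝ) (hC : 0 ≤ C)
    (hVar : ∀ N : ℕ, ∫ ω, (S N ω - N) ^ 2 ∂P ≤ C * N) :
    ∀ᵐ ω ∂P, ∀ᶠ N : ℕ in Filter.atTop, (N : ℝ) / 8 ≤ S N ω := by
  set A : ℕ → Set Ω :=
    fun m => {ω | (((m : ℝ) * m) / 2) ^ 2 ≤ (S (m * m) ω - ((m * m : ℕ) : ℝ)) ^ 2} with hA
  have hBC : ∀ᵐ ω ∂P, ∀ᶠ m : ℕ in Filter.atTop, ω ∉ A m := by
    apply MeasureTheory.ae_eventually_notMem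
    apply aux_tsum_ne_top (16 * C + 1) (by positivity)
    intro m
    have hKnn : (0:ℝ) ≤ (16 * C + 1) / ((m:ℝ)+1)^2 := by positivity
    rw [ENNReal.le_ofReal_iff_toReal_le (measure_ne_top _ _) hKnn]
    rcases Nat.eq_zero_or_pos m with rfl | hm
    · have h1 : (P (A 0)).toReal ≤ 1 := by
        rw [show ((1:ℝ)) = (P Set.univ).toReal by simp]
        exact ENNReal.toReal_mono (measure_ne_top _ _) (measure_mono (Set.subset_univ _))
      refine h1.trans ?_
      rw [le_div_iff₀ (by positivity)]
      push_cast
      nlinarith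
    · have hm1 : (1:ℝ) ≤ m := by exact_mod_cast hm
      have hε : (0:ℝ) < (((m:ℝ) * m) / 2) ^ 2 := by positivity
      have hmarkov := mul_meas_ge_le_integral_of_nonneg
        (ae_of_all P (fun ω => sq_nonneg (S (m*m) ω - ((m*m : ℕ):ℝ)))) (hint (m*m))
        ((((m : ℝ) * m) / 2) ^ 2)
      have hvar := hVar (m*m)
      have hcast : ((m*m : ℕ) : ℝ) = (m:ℝ) * m := by push_cast; ring
      have hPA : (((m : ℝ) * m) / 2) ^ 2 * (P (A m)).toReal ≤ C * ((m:ℝ) * m) := by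
        refine le_trans ?_ (hvar.trans_eq (by rw [hcast]))
        exact hmarkov
      have hPAtr : (P (A m)).toReal ≤ C * ((m:ℝ)*m) / ((((m : ℝ) * m) / 2) ^ 2) := by
        rw [le_div_iff₀ hε]
        linarith [hPA]
      refine hPAtr.trans ?_
      rw [div_le_div_iff₀ hε (by positivity)]
      have h4 : ((m:ℝ)+1)^2 ≤ 4 * (m:ℝ)^2 := by nlinarith
      have hmsq : (0:ℝ) < (m:ℝ)*m := by positivity
      -- C*(m*m) * (m+1)^2 ≤ (16C+1) * ((m*m)/2)^2
      have hexp : ((((m : ℝ) * m) / 2) ^ 2) = ((m:ℝ)^2)^2/4 := by ring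
      rw [hexp]
      nlinarith [sq_nonneg ((m:ℝ)^2), sq_nonneg (m:ℝ), hC, h4, hm1,
        mul_le_mul_of_nonneg_left h4 (mul_nonneg hC (le_of_lt hmsq))]
  filter_upwards [hBC] with ω hω
  obtain ⟨m₀, hm₀⟩ := Filter.eventually_atTop.mp hω
  rw [Filter.eventually_atTop]
  refine ⟨(m₀ + 1) * (m₀ + 1), fun N hN => ?_⟩
  set m := Nat.sqrt N with hmdef
  have hm1 : m₀ + 1 ≤ m := Nat.le_sqrt.mpr hN
  have hmge1 : 1 ≤ m := le_trans (Nat.le_add_left 1 m₀) hm1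
  have hnotA : ω ∉ A m := hm₀ m (le_trans (Nat.le_succ m₀) hm1)
  rw [hA, Set.mem_setOf_eq, not_le] at hnotA
  have habs : |S (m*m) ω - ((m*m : ℕ) : ℝ)| < ((m : ℝ) * m) / 2 :=
    abs_lt_of_sq_lt_sq hnotA (by positivity)
  have hcast : ((m*m : ℕ) : ℝ) = (m:ℝ) * m := by push_cast; ring
  have hS : ((m:ℝ) * m) / 2 ≤ S (m*m) ω := by
    have := abs_lt.mp habs
    rw [hcast] at this
    linarith [this.1]
  have hSN : S (m*m) ω ≤ S N ω := hmono (m*m) N ω (Nat.sqrt_le N)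
  have hNlt : (N : ℝ) < ((m:ℝ)+1) * ((m:ℝ)+1) := by
    have := Nat.lt_succ_sqrt N
    rw [← hmdef] at this
    exact_mod_cast this
  have hmr1 : (1:ℝ) ≤ m := by exact_mod_cast hmge1
  have h4 : ((m:ℝ)+1) * ((m:ℝ)+1) ≤ 4 * ((m:ℝ)*m) := by nlinarith
  calc (N : ℝ) / 8 ≤ ((m:ℝ) * m) / 2 := by linarith
    _ ≤ S N ω := hS.trans hSN

private abbrev sigmaX {Ω : Type*} (X : ℕ → Ω → ℝ) : MeasurableSpace Ω :=
  MeasurableSpace.comap (fun ω => fun l => X l ω) MeasurableSpace.pi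

set_option maxHeartbeats 2000000 in
/-- Vanishing maximum term: `W_n⁻¹ max_i w_i |g(X_i)| → 0` a.s., written in its
population-indexed ratio form with `w_i = π_i⁻¹` for the sampled units. -/
theorem stmt_15 {Ω : Type*} [MeasurableSpace Ω] (P : Measure Ω) [IsProbabilityMeasure P]
    (X : ℕ → Ω → ℝ) (hXm : ∀ l, Measurable (X l))
    (ν : Measure ℝ) [IsProbabilityMeasure ν]
    (hXindep : iIndepFun X P)
    (hXiid : ∀ l, Measure.map (X l) P = ν)
    (δ : ℕ → Ω → ℝ) (hδm : ∀ l, Measurable (δ l)) (hδ01 : ∀ l ω, δ l ω = 0 ∨ δ l ω = 1)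
    (π : ℕ → Ω → ℝ) (hπpos : ∀ l ω, 0 < π l ω) (hπle : ∀ l ω, π l ω ≤ 1)
    (πpair : ℕ → ℕ → Ω → ℝ)
    (hπmeas : ∀ l, Measurable[MeasurableSpace.comap (fun ω => fun l => X l ω)
        (MeasurableSpace.pi)] (π l))
    (hCond : ∀ l s, MeasurableSet[MeasurableSpace.comap (fun ω => fun l => X l ω)
        (MeasurableSpace.pi)] s →
      (∫ ω in s, δ l ω ∂P) = ∫ ω in s, π l ω ∂P)
    (hCond2 : ∀ l k s, l ≠ k →
      MeasurableSet[MeasurableSpace.comap (fun ω => fun l => X l ω)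
        (MeasurableSpace.pi)] s →
      (∫ ω in s, δ l ω * δ k ω ∂P) = ∫ ω in s, πpair l k ω ∂P)
    -- (i) bounded inverse inclusion probabilities:
    (γ : ℝ) (hγ : ∀ l ω, (π l ω)⁻¹ ≤ γ)
    -- (ii) asymptotically independent sampling, `sup_{k<l} |π_{lk}/(π_l π_k) - 1| = O(l⁻¹)`:
    (D : ℝ) (hD : ∀ l k : ℕ, k < l → ∀ ω,
      |πpair l k ω / (π l ω * π k ω) - 1| ≤ D / l)
    (g : ℝ → ℝ) (hgm : Measurable g) (hg2 : MemLp g 2 ν) :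
    ∀ᵐ ω ∂P, Filter.Tendsto
      (fun N : ℕ =>
        (⨆ l ∈ Icc 1 N, (π l ω)⁻¹ * δ l ω * |g (X l ω)|) /
          ∑ l ∈ Icc 1 N, (π l ω)⁻¹ * δ l ω)
      Filter.atTop (nhds 0) := by
  classical
  have hm : sigmaX X ≤ ‹MeasurableSpace Ω› := Measurable.comap_le (measurable_pi_lambda _ hXm)
  haveI hsig : SigmaFinite (P.trim hm) := inferInstance
  -- basic facts
  have hΩ : Nonempty Ω := by
    by_contra h
    rw [not_nonempty_iff] at h
    have h1 : P Set.univ = 1 := measure_univ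
    rw [Set.univ_eq_empty_iff.mpr h, measure_empty] at h1
    exact zero_ne_one h1
  obtain ⟨ω₀⟩ := hΩ
  have hδ0 : ∀ l ω, 0 ≤ δ l ω := fun l ω => by rcases hδ01 l ω with h | h <;> simp [h]
  have hδ1 : ∀ l ω, δ l ω ≤ 1 := fun l ω => by rcases hδ01 l ω with h | h <;> simp [h]
  have hπinvpos : ∀ l ω, 0 < (π l ω)⁻¹ := fun l ω => inv_pos.mpr (hπpos l ω)
  have hπinv1 : ∀ l ω, 1 ≤ (π l ω)⁻¹ := fun l ω => by
    rw [le_inv_comm₀ one_pos (hπpos l ω)]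
    simpa using hπle l ω
  have hγ1 : (1:ℝ) ≤ γ := le_trans (hπinv1 0 ω₀) (hγ 0 ω₀)
  have hγpos : (0:ℝ) < γ := lt_of_lt_of_le one_pos hγ1
  have hD0 : (0:ℝ) ≤ D := by
    have := hD 1 0 Nat.one_pos ω₀
    have h0 := abs_nonneg (πpair 1 0 ω₀ / (π 1 ω₀ * π 0 ω₀) - 1)
    have : (0:ℝ) ≤ D / (1:ℕ) := le_trans h0 this
    simpa using this
  have hπm : ∀ l, Measurable (π l) := fun l => (hπmeas l).mono hm le_rfl
  have intbd : ∀ (f : Ω → ℝ) (c : ℝ), Measurable f → (∀ ω, |f ω| ≤ c) → Integrable f P := by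
    intro f c hf hc
    exact (integrable_const c).mono' hf.aestronglyMeasurable
      (ae_of_all _ (fun ω => by simpa [Real.norm_eq_abs] using hc ω))
  -- the weights
  set Z : ℕ → Ω → ℝ := fun l ω => (π l ω)⁻¹ * δ l ω with hZdef
  have hZ0 : ∀ l ω, 0 ≤ Z l ω := fun l ω => mul_nonneg (hπinvpos l ω).le (hδ0 l ω)
  have hZγ : ∀ l ω, Z l ω ≤ γ := fun l ω => by
    calc (π l ω)⁻¹ * δ l ω ≤ γ * 1 :=
      mul_le_mul (hγ l ω) (hδ1 l ω) (hδ0 l ω) hγpos.le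
    _ = γ := mul_one γ
  have hZabs : ∀ l ω, |Z l ω| ≤ γ := fun l ω => by
    rw [abs_of_nonneg (hZ0 l ω)]; exact hZγ l ω
  have hZm : ∀ l, Measurable (Z l) := fun l => ((hπm l).inv.mul (hδm l))
  have hZint : ∀ l, Integrable (Z l) P := fun l => intbd _ γ (hZm l) (hZabs l)
  have hδabs : ∀ l ω, |δ l ω| ≤ 1 := fun l ω => by
    rw [abs_of_nonneg (hδ0 l ω)]; exact hδ1 l ω
  have hδint : ∀ l, Integrable (δ l) P := fun l => intbd _ 1 (hδm l) (hδabs l)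
  -- conditional expectation identification : π l = P[δ l | sigmaX X]
  have hπabs : ∀ l ω, |π l ω| ≤ 1 := fun l ω => by
    rw [abs_of_pos (hπpos l ω)]; exact hπle l ω
  have hπint : ∀ l, Integrable (π l) P := fun l => intbd _ 1 (hπm l) (hπabs l)
  have hπδ : ∀ l, π l =ᵐ[P] P[δ l | sigmaX X] := fun l =>
    ae_eq_condExp_of_forall_setIntegral_eq hm (hδint l)
      (fun s _ _ => (hπint l).integrableOn)
      (fun s hs _ => (hCond l s hs).symm)
      ((hπmeas l).stronglyMeasurable.aestronglyMeasurable)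
  -- pull-out property
  have pull : ∀ (f h : Ω → ℝ), StronglyMeasurable[sigmaX X] f → Integrable (f * h) P →
      Integrable h P → ∫ ω, f ω * h ω ∂P = ∫ ω, f ω * (P[h | sigmaX X]) ω ∂P := by
    intro f h hf hfh hh
    calc ∫ ω, f ω * h ω ∂P = ∫ ω, (f * h) ω ∂P := rfl
      _ = ∫ ω, (P[f * h | sigmaX X]) ω ∂P := (integral_condExp hm).symm
      _ = ∫ ω, (f * P[h | sigmaX X]) ω ∂P :=
          integral_congr_ae (condExp_mul_of_stronglyMeasurable_left hf hfh hh)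
      _ = ∫ ω, f ω * (P[h | sigmaX X]) ω ∂P := rfl
  -- first moment
  have hEZ : ∀ l, ∫ ω, Z l ω ∂P = 1 := by
    intro l
    have hsm : StronglyMeasurable[sigmaX X] (fun ω => (π l ω)⁻¹) :=
      ((hπmeas l).inv).stronglyMeasurable
    have hint1 : Integrable ((fun ω => (π l ω)⁻¹) * δ l) P := hZint l
    calc ∫ ω, Z l ω ∂P
        = ∫ ω, (π l ω)⁻¹ * (P[δ l | sigmaX X]) ω ∂P := pull _ _ hsm hint1 (hδint l)
      _ = ∫ ω, (π l ω)⁻¹ * π l ω ∂P := by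
          refine integral_congr_ae ?_
          filter_upwards [hπδ l] with ω hω
          rw [← hω]
      _ = ∫ _ω, (1:ℝ) ∂P :=
          integral_congr_ae (ae_of_all _ fun ω => inv_mul_cancel₀ (hπpos l ω).ne')
      _ = 1 := by simp
  -- second moments
  have hEZsq : ∀ l, ∫ ω, Z l ω * Z l ω ∂P ≤ γ := by
    intro l
    have hfe : ∀ ω, Z l ω * Z l ω = ((π l ω)⁻¹ * (π l ω)⁻¹) * δ l ω := by
      intro ω
      rcases hδ01 l ω with h | h <;> simp only [hZdef, h] <;> ring
    have hsm : StronglyMeasurable[sigmaX X] (fun ω => (π l ω)⁻¹ * (π l ω)⁻¹) :=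
      ((hπmeas l).inv.mul (hπmeas l).inv).stronglyMeasurable
    have hint1 : Integrable ((fun ω => (π l ω)⁻¹ * (π l ω)⁻¹) * δ l) P := by
      refine intbd _ (γ * γ) (((hπm l).inv.mul (hπm l).inv).mul (hδm l)) (fun ω => ?_)
      have h1 : |(π l ω)⁻¹ * (π l ω)⁻¹ * δ l ω| = (π l ω)⁻¹ * (π l ω)⁻¹ * δ l ω := by
        rw [abs_of_nonneg]
        exact mul_nonneg (mul_nonneg (hπinvpos l ω).le (hπinvpos l ω).le) (hδ0 l ω)
      rw [Pi.mul_apply, h1]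
      calc (π l ω)⁻¹ * (π l ω)⁻¹ * δ l ω ≤ (γ * γ) * 1 := by
            refine mul_le_mul ?_ (hδ1 l ω) (hδ0 l ω) (by positivity)
            exact mul_le_mul (hγ l ω) (hγ l ω) (hπinvpos l ω).le hγpos.le
        _ = γ * γ := mul_one _
    calc ∫ ω, Z l ω * Z l ω ∂P
        = ∫ ω, ((π l ω)⁻¹ * (π l ω)⁻¹) * δ l ω ∂P :=
          integral_congr_ae (ae_of_all _ hfe)
      _ = ∫ ω, ((π l ω)⁻¹ * (π l ω)⁻¹) * (P[δ l | sigmaX X]) ω ∂P :=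
          pull _ _ hsm hint1 (hδint l)
      _ = ∫ ω, ((π l ω)⁻¹ * (π l ω)⁻¹) * π l ω ∂P := by
          refine integral_congr_ae ?_
          filter_upwards [hπδ l] with ω hω
          rw [← hω]
      _ = ∫ ω, (π l ω)⁻¹ ∂P := by
          refine integral_congr_ae (ae_of_all _ fun ω => ?_)
          field_simp
      _ ≤ ∫ _ω, γ ∂P := by
          refine integral_mono (intbd _ γ (hπm l).inv
            (fun ω => by rw [abs_of_pos (hπinvpos l ω)]; exact hγ l ω))
            (integrable_const γ) (fun ω => hγ l ω)
      _ = γ := by simp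
  have hEZZ : ∀ l k : ℕ, k < l → ∫ ω, Z l ω * Z k ω ∂P ≤ 1 + D / l := by
    intro l k hkl
    have hlne : l ≠ k := (ne_of_gt hkl)
    have hlpos : 0 < l := lt_of_le_of_lt (Nat.zero_le k) hkl
    have hl1 : (1:ℝ) ≤ (l:ℝ) := by exact_mod_cast hlpos
    have hDl0 : (0:ℝ) ≤ 1 + D / l := by positivity
    have hDlD : D / (l:ℝ) ≤ D := by
      rw [div_le_iff₀ (by linarith : (0:ℝ) < (l:ℝ))]
      nlinarith
    set f : Ω → ℝ := fun ω => (π l ω)⁻¹ * (π k ω)⁻¹ with hfdef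
    set v : Ω → ℝ := fun ω => (1 + D / l) * (π l ω * π k ω) with hvdef
    have hfm : StronglyMeasurable[sigmaX X] f :=
      ((hπmeas l).inv.mul (hπmeas k).inv).stronglyMeasurable
    have hf0 : ∀ ω, 0 ≤ f ω := fun ω =>
      mul_nonneg (hπinvpos l ω).le (hπinvpos k ω).le
    have hfγ : ∀ ω, f ω ≤ γ * γ := fun ω =>
      mul_le_mul (hγ l ω) (hγ k ω) (hπinvpos k ω).le hγpos.le
    have hδδm : Measurable (fun ω => δ l ω * δ k ω) := (hδm l).mul (hδm k)
    have hδδint : Integrable (fun ω => δ l ω * δ k ω) P := by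
      refine intbd _ 1 hδδm (fun ω => ?_)
      rw [abs_mul]
      calc |δ l ω| * |δ k ω| ≤ 1 * 1 :=
        mul_le_mul (hδabs l ω) (hδabs k ω) (abs_nonneg _) zero_le_one
      _ = 1 := mul_one 1
    have hfδδint : Integrable (f * fun ω => δ l ω * δ k ω) P := by
      refine intbd _ (γ * γ) (((hπm l).inv.mul (hπm k).inv).mul hδδm) (fun ω => ?_)
      rw [Pi.mul_apply, abs_mul]
      calc |f ω| * |δ l ω * δ k ω| ≤ (γ * γ) * 1 := by
            refine mul_le_mul ?_ ?_ (abs_nonneg _) (by positivity)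
            · rw [abs_of_nonneg (hf0 ω)]; exact hfγ ω
            · rw [abs_mul]
              calc |δ l ω| * |δ k ω| ≤ 1 * 1 :=
                mul_le_mul (hδabs l ω) (hδabs k ω) (abs_nonneg _) zero_le_one
              _ = 1 := mul_one 1
        _ = γ * γ := mul_one _
    have hvm : StronglyMeasurable[sigmaX X] v :=
      (((hπmeas l).mul (hπmeas k)).const_mul _).stronglyMeasurable
    have hv0 : ∀ ω, 0 ≤ v ω := fun ω =>
      mul_nonneg hDl0 (mul_nonneg (hπpos l ω).le (hπpos k ω).le)
    have hvbd : ∀ ω, |v ω| ≤ 1 + D := fun ω => by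
      rw [abs_of_nonneg (hv0 ω)]
      calc (1 + D / l) * (π l ω * π k ω) ≤ (1 + D) * 1 := by
            refine mul_le_mul (by linarith) ?_
              (mul_nonneg (hπpos l ω).le (hπpos k ω).le) (by linarith)
            calc π l ω * π k ω ≤ 1 * 1 :=
              mul_le_mul (hπle l ω) (hπle k ω) (hπpos k ω).le zero_le_one
            _ = 1 := mul_one 1
        _ = 1 + D := mul_one _
    have hvint : Integrable v P :=
      intbd _ (1 + D) (((hπm l).mul (hπm k)).const_mul _) hvbd
    have hpt : ∀ ω, πpair l k ω ≤ v ω := by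
      intro ω
      have hππ : 0 < π l ω * π k ω := mul_pos (hπpos l ω) (hπpos k ω)
      have h1 := (abs_le.mp (hD l k hkl ω)).2
      rw [hvdef]
      rw [sub_le_iff_le_add, div_le_iff₀ hππ] at h1
      calc πpair l k ω ≤ (D / l + 1) * (π l ω * π k ω) := h1
        _ = (1 + D / l) * (π l ω * π k ω) := by ring
    have hcmp : P[(fun ω => δ l ω * δ k ω) | sigmaX X] ≤ᵐ[P] v := by
      refine ae_le_of_ae_le_trim (hm := hm) ?_
      refine ae_le_of_forall_setIntegral_le
        (integrable_condExp.trim hm stronglyMeasurable_condExp)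
        (hvint.trim hm hvm) (fun s hs _ => ?_)
      rw [← setIntegral_trim hm stronglyMeasurable_condExp hs,
        ← setIntegral_trim hm hvm hs,
        setIntegral_condExp hm hδδint hs, hCond2 l k s hlne hs]
      by_cases hip : IntegrableOn (πpair l k) s P
      · exact integral_mono hip hvint.integrableOn hpt
      · rw [integral_undef hip]
        exact setIntegral_nonneg (hm s hs) (fun ω _ => hv0 ω)
    have hfu_int : Integrable (fun ω => f ω * (P[(fun ω => δ l ω * δ k ω) | sigmaX X]) ω) P := by
      refine Integrable.bdd_mul (c := γ * γ) integrable_condExp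
        ((hfm.mono hm).aestronglyMeasurable) (ae_of_all _ fun ω => ?_)
      rw [Real.norm_eq_abs, abs_of_nonneg (hf0 ω)]
      exact hfγ ω
    have hfv_int : Integrable (fun ω => f ω * v ω) P := by
      refine Integrable.bdd_mul (c := γ * γ) hvint ((hfm.mono hm).aestronglyMeasurable)
        (ae_of_all _ fun ω => ?_)
      rw [Real.norm_eq_abs, abs_of_nonneg (hf0 ω)]
      exact hfγ ω
    calc ∫ ω, Z l ω * Z k ω ∂P
        = ∫ ω, f ω * (δ l ω * δ k ω) ∂P := by
          refine integral_congr_ae (ae_of_all _ fun ω => ?_)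
          simp only [hZdef, hfdef]
          ring
      _ = ∫ ω, f ω * (P[(fun ω => δ l ω * δ k ω) | sigmaX X]) ω ∂P :=
          pull _ _ hfm hfδδint hδδint
      _ ≤ ∫ ω, f ω * v ω ∂P := by
          refine integral_mono_ae hfu_int hfv_int ?_
          filter_upwards [hcmp] with ω hω
          exact mul_le_mul_of_nonneg_left hω (hf0 ω)
      _ = ∫ _ω, (1 + D / l) ∂P := by
          refine integral_congr_ae (ae_of_all _ fun ω => ?_)
          simp only [hfdef, hvdef]
          have h1 : π l ω ≠ 0 := (hπpos l ω).ne'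
          have h2 : π k ω ≠ 0 := (hπpos k ω).ne'
          have h3 : (l:ℝ) ≠ 0 := by positivity
          field_simp
      _ = 1 + D / l := by simp
  -- partial sums
  set S : ℕ → Ω → ℝ := fun N ω => ∑ l ∈ Icc 1 N, Z l ω with hSdef
  have hSm : ∀ N, Measurable (S N) := fun N =>
    Finset.measurable_sum _ (fun l _ => hZm l)
  have hcard : ∀ N : ℕ, (Icc 1 N).card = N := fun N => by
    rw [Nat.card_Icc]
    omega
  have hSabs : ∀ N ω, |S N ω| ≤ γ * N := by
    intro N ω
    calc |S N ω| ≤ ∑ l ∈ Icc 1 N, |Z l ω| := Finset.abs_sum_le_sum_abs _ _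
      _ ≤ ∑ _l ∈ Icc 1 N, γ := Finset.sum_le_sum (fun l _ => hZabs l ω)
      _ = γ * N := by rw [Finset.sum_const, hcard]; ring
  have hSint : ∀ N, Integrable (S N) P := fun N =>
    integrable_finset_sum _ (fun l _ => hZint l)
  have hES : ∀ N : ℕ, ∫ ω, S N ω ∂P = N := by
    intro N
    rw [hSdef]
    rw [integral_finset_sum _ (fun l _ => hZint l)]
    rw [Finset.sum_congr rfl (fun l _ => hEZ l), Finset.sum_const, hcard]
    simp
  have hZZint : ∀ l k, Integrable (fun ω => Z l ω * Z k ω) P := by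
    intro l k
    refine intbd _ (γ * γ) ((hZm l).mul (hZm k)) (fun ω => ?_)
    rw [abs_mul]
    exact mul_le_mul (hZabs l ω) (hZabs k ω) (abs_nonneg _) hγpos.le
  have hSS : ∀ N, Integrable (fun ω => S N ω * S N ω) P := by
    intro N
    refine intbd _ ((γ * N) * (γ * N)) ((hSm N).mul (hSm N)) (fun ω => ?_)
    rw [abs_mul]
    exact mul_le_mul (hSabs N ω) (hSabs N ω) (abs_nonneg _)
      (by positivity)
  have hESsq : ∀ N : ℕ, ∫ ω, S N ω * S N ω ∂P ≤ (N:ℝ)^2 + (γ + 2*D) * N := by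
    intro N
    induction N with
    | zero =>
      simp [hSdef]
    | succ N ih =>
      have hsplit : ∀ ω, S (N+1) ω = S N ω + Z (N+1) ω := fun ω =>
        Finset.sum_Icc_succ_top (Nat.succ_le_succ (Nat.zero_le N)) _
      have hSZint : Integrable (fun ω => S N ω * Z (N+1) ω) P := by
        refine intbd _ ((γ * N) * γ) ((hSm N).mul (hZm (N+1))) (fun ω => ?_)
        rw [abs_mul]
        exact mul_le_mul (hSabs N ω) (hZabs (N+1) ω) (abs_nonneg _) (by positivity)
      have hESZ : ∫ ω, S N ω * Z (N+1) ω ∂P ≤ (N:ℝ) + D := by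
        have heq : ∫ ω, S N ω * Z (N+1) ω ∂P
            = ∑ k ∈ Icc 1 N, ∫ ω, Z k ω * Z (N+1) ω ∂P := by
          rw [← integral_finset_sum _ (fun k _ => hZZint k (N+1))]
          refine integral_congr_ae (ae_of_all _ fun ω => ?_)
          show S N ω * Z (N+1) ω = ∑ i ∈ Icc 1 N, Z i ω * Z (N+1) ω
          rw [hSdef]
          exact Finset.sum_mul _ _ _
        rw [heq]
        have hbd : ∀ k ∈ Icc 1 N, ∫ ω, Z k ω * Z (N+1) ω ∂P ≤ 1 + D / (N+1) := by
          intro k hk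
          have hkN : k < N + 1 := Nat.lt_succ_of_le (Finset.mem_Icc.mp hk).2
          have := hEZZ (N+1) k hkN
          calc ∫ ω, Z k ω * Z (N+1) ω ∂P
              = ∫ ω, Z (N+1) ω * Z k ω ∂P := by
                refine integral_congr_ae (ae_of_all _ fun ω => ?_)
                ring
            _ ≤ 1 + D / (N+1) := by exact_mod_cast this
        calc ∑ k ∈ Icc 1 N, ∫ ω, Z k ω * Z (N+1) ω ∂P
            ≤ ∑ _k ∈ Icc 1 N, (1 + D / ((N:ℝ)+1)) := Finset.sum_le_sum hbd
          _ = (N:ℝ) * (1 + D / ((N:ℝ)+1)) := by rw [Finset.sum_const, hcard]; ring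
          _ ≤ (N:ℝ) + D := by
              have hN1 : (0:ℝ) < (N:ℝ) + 1 := by positivity
              have h1 : (N:ℝ) * (1 + D / ((N:ℝ)+1)) = (N:ℝ) + D * ((N:ℝ)/((N:ℝ)+1)) := by
                field_simp
              have h2 : (N:ℝ)/((N:ℝ)+1) ≤ 1 := by
                rw [div_le_one hN1]; linarith
              have h3 : D * ((N:ℝ)/((N:ℝ)+1)) ≤ D * 1 := mul_le_mul_of_nonneg_left h2 hD0
              rw [h1]
              linarith
      have hint2 : Integrable (fun ω => S N ω * S N ω + 2 * (S N ω * Z (N+1) ω)) P :=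
        (hSS N).add (hSZint.const_mul 2)
      have hexpand : ∫ ω, S (N+1) ω * S (N+1) ω ∂P
          = ∫ ω, S N ω * S N ω ∂P + 2 * ∫ ω, S N ω * Z (N+1) ω ∂P
            + ∫ ω, Z (N+1) ω * Z (N+1) ω ∂P := by
        rw [← integral_const_mul, ← integral_add (hSS N) (hSZint.const_mul 2),
          ← integral_add hint2 (hZZint (N+1) (N+1))]
        refine integral_congr_ae (ae_of_all _ fun ω => ?_)
        simp only [hsplit]
        ring
      rw [hexpand]
      push_cast
      have h3 := hEZsq (N+1)
      nlinarith [ih, hESZ, h3]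
  have hVarint : ∀ N : ℕ, Integrable (fun ω => (S N ω - N)^2) P := by
    intro N
    refine intbd _ ((γ * N + N)^2) ((((hSm N).sub measurable_const).pow measurable_const))
      (fun ω => ?_)
    rw [abs_of_nonneg (sq_nonneg _), ← sq_abs]
    refine pow_le_pow_left₀ (abs_nonneg _) ?_ 2
    calc |S N ω - N| ≤ |S N ω| + |(N:ℝ)| := abs_sub _ _
      _ ≤ γ * N + N := by
          have := hSabs N ω
          have h2 : |(N:ℝ)| = N := abs_of_nonneg (Nat.cast_nonneg N)
          linarith
  have hVar : ∀ N : ℕ, ∫ ω, (S N ω - N)^2 ∂P ≤ (γ + 2*D) * N := by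
    intro N
    have hint1 : Integrable (fun ω => S N ω * S N ω - 2 * N * S N ω) P :=
      (hSS N).sub ((hSint N).const_mul _)
    have hexp : ∫ ω, (S N ω - N)^2 ∂P
        = ∫ ω, S N ω * S N ω ∂P - 2 * N * ∫ ω, S N ω ∂P + (N:ℝ)^2 := by
      rw [← integral_const_mul, ← integral_sub (hSS N) ((hSint N).const_mul _)]
      rw [show ((N:ℝ)^2) = ∫ _ω, ((N:ℝ)^2) ∂P by simp]
      rw [← integral_add hint1 (integrable_const _)]
      refine integral_congr_ae (ae_of_all _ fun ω => ?_)
      ring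
    rw [hexp, hES N]
    have := hESsq N
    nlinarith [this]
  -- almost sure linear lower bound for S
  have hmono : ∀ (M N : ℕ) (ω : Ω), M ≤ N → S M ω ≤ S N ω := by
    intro M N ω hMN
    refine Finset.sum_le_sum_of_subset_of_nonneg
      (Finset.Icc_subset_Icc_right hMN) (fun l _ _ => hZ0 l ω)
  have hCnn : (0:ℝ) ≤ γ + 2*D := by linarith
  have hlow := aux_lowerbound P S hmono hVarint (γ + 2*D) hCnn hVar
  -- the max term
  have hgint2 : Integrable (fun x => g x^2) ν := hg2.integrable_sq
  set G := ∫ x, g x^2 ∂ν with hGdef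
  have hGnn : 0 ≤ G := integral_nonneg fun x => sq_nonneg _
  have htail : ∀ (l : ℕ) (t : ℝ), 0 < t →
      (P {ω | t ≤ |g (X l ω)|}).toReal ≤ G / t^2 := by
    intro l t ht
    have hmap : P {ω | t ≤ |g (X l ω)|} = ν {x | t ≤ |g x|} := by
      rw [← hXiid l, Measure.map_apply (hXm l)
        (measurableSet_le measurable_const hgm.abs)]
      rfl
    rw [hmap]
    exact aux_cheby ν g hgint2 t ht
  have hmax := aux_maxterm P (fun l ω => g (X l ω)) G hGnn htail
  -- conclusion
  filter_upwards [hlow, hmax] with ω hlb htend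
  rw [Metric.tendsto_nhds]
  intro ε hε
  set ε' := ε / (32 * γ) with hε'def
  have hε'pos : 0 < ε' := by positivity
  obtain ⟨L, hL⟩ := Filter.eventually_atTop.mp
    ((Metric.tendsto_nhds.mp htend ε' hε'pos).and (Filter.eventually_ge_atTop 1))
  set A := ∑ j ∈ Finset.range (L+1), |g (X j ω)| with hAdef
  have hA0 : 0 ≤ A := Finset.sum_nonneg (fun j _ => abs_nonneg _)
  have hgb : ∀ l N : ℕ, l ≤ N → |g (X l ω)| ≤ A + ε' * N := by
    intro l N hlN
    rcases le_or_gt L l with hl | hl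
    · obtain ⟨hd, hl1⟩ := hL l hl
      have hlpos : (0:ℝ) < l := by exact_mod_cast hl1
      rw [Real.dist_eq, sub_zero, abs_of_nonneg (by positivity)] at hd
      have h1 : |g (X l ω)| < ε' * l := by
        rw [div_lt_iff₀ hlpos] at hd
        linarith [hd]
      have h2 : ε' * (l:ℝ) ≤ ε' * N := by
        have : (l:ℝ) ≤ N := by exact_mod_cast hlN
        nlinarith
      linarith
    · have hmem : l ∈ Finset.range (L+1) := Finset.mem_range.mpr (Nat.lt_succ_of_lt hl)
      have h1 : |g (X l ω)| ≤ A :=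
        Finset.single_le_sum (fun j _ => abs_nonneg (g (X j ω))) hmem
      have h2 : (0:ℝ) ≤ ε' * N := by positivity
      linarith
  obtain ⟨N₁, hN₁⟩ := Filter.eventually_atTop.mp hlb
  set N₂ : ℕ := Nat.ceil (32*γ*A/ε) + 1 with hN₂def
  rw [Filter.eventually_atTop]
  refine ⟨max (max N₁ 1) N₂, fun N hN => ?_⟩
  have hNN₁ : N₁ ≤ N := le_trans (le_trans (le_max_left _ _) (le_max_left _ _)) hN
  have hN1 : 1 ≤ N := le_trans (le_trans (le_max_right _ _) (le_max_left _ _)) hN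
  have hNN₂ : N₂ ≤ N := le_trans (le_max_right _ _) hN
  have hNpos : (0:ℝ) < N := by exact_mod_cast hN1
  have hden : (N:ℝ)/8 ≤ S N ω := hN₁ N hNN₁
  have hdenpos : 0 < S N ω := lt_of_lt_of_le (by positivity) hden
  set c := γ * (A + ε' * N) with hcdef
  have hc0 : (0:ℝ) ≤ c := by positivity
  have hnum_le : (⨆ l ∈ Icc 1 N, (π l ω)⁻¹ * δ l ω * |g (X l ω)|) ≤ c := by
    refine Real.iSup_le (fun l => Real.iSup_le (fun hl => ?_) hc0) hc0
    have hlN : l ≤ N := (Finset.mem_Icc.mp hl).2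
    calc (π l ω)⁻¹ * δ l ω * |g (X l ω)| ≤ γ * (A + ε' * N) :=
      mul_le_mul (hZγ l ω) (hgb l N hlN) (abs_nonneg _) hγpos.le
    _ = c := rfl
  have hnum0 : 0 ≤ (⨆ l ∈ Icc 1 N, (π l ω)⁻¹ * δ l ω * |g (X l ω)|) := by
    refine Real.iSup_nonneg (fun l => Real.iSup_nonneg (fun hl => ?_))
    have := hZ0 l ω
    positivity
  have hratio : (⨆ l ∈ Icc 1 N, (π l ω)⁻¹ * δ l ω * |g (X l ω)|) /
      ∑ l ∈ Icc 1 N, (π l ω)⁻¹ * δ l ω ≤ c / ((N:ℝ)/8) := by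
    refine div_le_div₀ hc0 hnum_le (by positivity) ?_
    exact hden.trans_eq rfl
  have hfrac : c / ((N:ℝ)/8) = 8*γ*A/N + 8*γ*ε' := by
    rw [hcdef]
    field_simp
  have hNgt : 32*γ*A/ε < (N:ℝ) := by
    have h1 : (32*γ*A/ε) ≤ (Nat.ceil (32*γ*A/ε) : ℝ) := Nat.le_ceil _
    have h2 : ((Nat.ceil (32*γ*A/ε) : ℕ) : ℝ) < N := by
      rw [hN₂def] at hNN₂
      exact_mod_cast Nat.lt_of_succ_le hNN₂
    linarith
  have hsmall : 8*γ*A/(N:ℝ) < ε/4 := by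
    rw [div_lt_iff₀ hNpos]
    rw [div_lt_iff₀ hε] at hNgt
    linarith
  have h8 : 8*γ*ε' = ε/4 := by
    rw [hε'def]
    field_simp
    ring
  rw [Real.dist_eq, sub_zero, abs_of_nonneg (div_nonneg hnum0 hdenpos.le)]
  calc (⨆ l ∈ Icc 1 N, (π l ω)⁻¹ * δ l ω * |g (X l ω)|) /
      ∑ l ∈ Icc 1 N, (π l ω)⁻¹ * δ l ω ≤ c / ((N:ℝ)/8) := hratio
    _ = 8*γ*A/N + 8*γ*ε' := hfrac
    _ < ε/4 + ε/4 := by linarith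
    _ ≤ ε := by linarith
end
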